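/- arXiv:1511.05623 — 4 statements merged into one kernel-verified Lean document; each statement's English description precedes it below -/
import Mathlib

section
/- Let (V, E, s, t) be a finite connected directed multigraph and let B ⊆ V be a nonempty set of boundary vertices. Then for every function ρ : E → ℝ there exists a discrete antiderivative of ρ rel B, i.e. a function λ : E → ℝ such that for every vertex v ∉ B one has Σ_{e : t(e) = v} λ(e) = Σ_{e : s(e) = v} (λ(e) − ρ(e)). -/
/-!
Write `∂f v` for the net inflow `∑_{t e = v} f e - ∑_{s e = v} f e` of a flow `f : E → ℝ`;
the Kirchhoff rule at `v` says `∂λ v = -∑_{s e = v} ρ e`. The map `∂` is linear, and an edge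
between `u` and `w` puts `±(δ_w - δ_u)` in its range, so along a path from a boundary vertex `b`
to `v` one gets `δ_v - δ_b ∈ range ∂`. By connectedness these span every `c - (∑ c) δ_b`, hence
any prescribed net inflow can be realised away from `b`, in particular off `B`.
-/

open Finset

namespace DiscreteAntiderivative

variable {V E : Type*} [DecidableEq V] (s t : E → V)

noncomputable def netInflow [Fintype E] : (E → ℝ) →ₗ[ℝ] V → ℝ :=
  Fintype.linearCombination ℝ fun e => Pi.single (t e) 1 - Pi.single (s e) 1

theorem netInflow_apply [Fintype E] (f : E → ℝ) (v : V) :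
    netInflow s t f v =
      ∑ e ∈ univ.filter (fun e => t e = v), f e -
        ∑ e ∈ univ.filter (fun e => s e = v), f e := by
  simp [netInflow, Fintype.linearCombination_apply, Finset.sum_apply, Pi.single_apply,
    mul_sub, Finset.sum_sub_distrib, Finset.sum_filter, eq_comm]

theorem single_sub_single_mem_range_netInflow [Fintype E] {a v : V}
    (h : Relation.ReflTransGen
      (fun a b => ∃ e, (s e = a ∧ t e = b) ∨ (s e = b ∧ t e = a)) a v) :
    Pi.single v 1 - Pi.single a 1 ∈ LinearMap.range (netInflow s t) := by
  classical
  induction h with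
  | refl => simp
  | @tail u w _ hstep ih =>
    have hedge : Pi.single w 1 - Pi.single u 1 ∈ LinearMap.range (netInflow s t) := by
      obtain ⟨e, ⟨rfl, rfl⟩ | ⟨rfl, rfl⟩⟩ := hstep
      · exact ⟨Pi.single e 1, by simp [netInflow]⟩
      · exact ⟨-Pi.single e 1, by simp [netInflow]⟩
    simpa using add_mem hedge ih

theorem exists_netInflow_eq_of_ne [Fintype V] [Fintype E] {b : V}
    (hconn : ∀ v, Relation.ReflTransGen
      (fun a b => ∃ e, (s e = a ∧ t e = b) ∨ (s e = b ∧ t e = a)) b v)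
    (c : V → ℝ) : ∃ f, ∀ v ≠ b, netInflow s t f v = c v := by
  have hmem : c - (∑ v, c v) • Pi.single b 1 ∈ LinearMap.range (netInflow s t) := by
    have hc : c - (∑ v, c v) • Pi.single b 1 =
        ∑ v, c v • (Pi.single v 1 - Pi.single b 1) := by
      simp only [smul_sub, Finset.sum_sub_distrib, Finset.sum_smul, ← pi_eq_sum_univ' c]
    rw [hc]
    exact sum_mem fun v _ =>
      Submodule.smul_mem _ _ (single_sub_single_mem_range_netInflow s t (hconn v))
  obtain ⟨f, hf⟩ := hmem
  refine ⟨f, fun v hv => ?_⟩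
  simp [hf, hv]

end DiscreteAntiderivative

/-- On a finite connected directed multigraph `(V, E, s, t)` with a
nonempty set `B` of boundary vertices, every density `ρ : E → ℝ` admits a discrete
antiderivative rel `B`: a function `l : E → ℝ` such that for every vertex `v ∉ B`,
the Kirchhoff rule `∑_{e : t(e) = v} l(e) = ∑_{e : s(e) = v} (l(e) − ρ(e))` holds. -/
theorem stmt_0 {V E : Type*} [Fintype V] [Fintype E] [DecidableEq V]
    (s t : E → V)
    (hconn : ∀ v w : V, Relation.ReflTransGen
      (fun a b => ∃ e, (s e = a ∧ t e = b) ∨ (s e = b ∧ t e = a)) v w)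
    (B : Set V) (hB : B.Nonempty) (ρ : E → ℝ) :
    ∃ l : E → ℝ, ∀ v ∉ B,
      ∑ e ∈ Finset.univ.filter (fun e => t e = v), l e =
      ∑ e ∈ Finset.univ.filter (fun e => s e = v), (l e - ρ e) := by
  obtain ⟨b, hb⟩ := hB
  obtain ⟨l, hl⟩ := DiscreteAntiderivative.exists_netInflow_eq_of_ne s t (hconn b)
    fun v => -∑ e ∈ univ.filter (fun e => s e = v), ρ e
  refine ⟨l, fun v hv => ?_⟩
  have hkirchhoff := hl v (ne_of_mem_of_not_mem hb hv).symm
  rw [DiscreteAntiderivative.netInflow_apply] at hkirchhoff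
  rw [Finset.sum_sub_distrib]
  linarith
end

section
/- Let (V, E, s, t) be a finite directed multigraph and let ε : E → ℝ take values in {−1, 1}. Assume that for every nonempty subset E' ⊆ E there exists a vertex v with Σ_{e ∈ E', t(e) = v} ε(e) ≠ Σ_{e ∈ E', s(e) = v} ε(e) (i.e. the ε-weighted boundary of the 1-chain Σ_{e ∈ E'} ε(e)·e is nonzero). Then there exists a function η : V → ℝ such that ε(e)·(η(t(e)) − η(s(e))) > 0 for every edge e; in particular, the 1-coboundary ξ(e) := η(t(e)) − η(s(e)) satisfies sign ξ = ε. -/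
/-!
Reverse every edge with `ε e = -1`. The hypothesis says that no nonempty set of reoriented edges
has in-degree equal to out-degree at every vertex. The edge set of a closed walk with no repeated
edge would be such a set, and any closed walk can be shortened to one with no repeated edge, so the
reoriented graph has no directed cycle. On an acyclic graph, the number of strict ancestors of a
vertex increases strictly along every edge, and this count is the required `η`.
-/

open Finset
open scoped List

theorem Relation.exists_rank_lt_of_not_transGen_self {V : Type*} [Fintype V]
    {r : V → V → Prop} (h : ∀ v, ¬ Relation.TransGen r v v) :
    ∃ η : V → ℕ, ∀ a b, r a b → η a < η b := by
  classical
  refine ⟨fun v => #{u | Relation.TransGen r u v}, fun a b hab => card_lt_card ?_⟩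
  refine ssubset_iff_of_subset (fun u hu => ?_) |>.2 ⟨a, ?_, ?_⟩
  · simp only [Finset.mem_filter_univ] at hu ⊢
    exact hu.tail hab
  · simpa using Relation.TransGen.single hab
  · simp [h a]

namespace Multidigraph

variable {V E : Type*} {src tgt : E → V}

def IsWalk (src tgt : E → V) : V → V → List E → Prop
  | a, b, [] => a = b
  | a, b, e :: l => src e = a ∧ IsWalk src tgt (tgt e) b l

def Adj (src tgt : E → V) (a b : V) : Prop := ∃ e, src e = a ∧ tgt e = b

theorem isWalk_append_iff {a c : V} {l₁ l₂ : List E} :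
    IsWalk src tgt a c (l₁ ++ l₂) ↔ ∃ b, IsWalk src tgt a b l₁ ∧ IsWalk src tgt b c l₂ := by
  induction l₁ generalizing a with
  | nil => simp [IsWalk]
  | cons e l ih => simp [IsWalk, ih, and_assoc]

theorem exists_isWalk_of_transGen {a b : V} (h : Relation.TransGen (Adj src tgt) a b) :
    ∃ l, l ≠ [] ∧ IsWalk src tgt a b l := by
  induction h with
  | single hab =>
    obtain ⟨e, rfl, rfl⟩ := hab
    exact ⟨[e], by simp, rfl, rfl⟩
  | tail _ hbc ih =>
    obtain ⟨l, hl, hw⟩ := ih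
    obtain ⟨e, rfl, rfl⟩ := hbc
    exact ⟨l ++ [e], by simp, isWalk_append_iff.2 ⟨_, hw, rfl, rfl⟩⟩

theorem IsWalk.map_src_append {a b : V} {l : List E} (h : IsWalk src tgt a b l) :
    l.map src ++ [b] = a :: l.map tgt := by
  induction l generalizing a with
  | nil => simp [h.symm]
  | cons e l ih => simp [h.1, ih h.2]

theorem IsWalk.map_src_perm_map_tgt {a : V} {l : List E} (h : IsWalk src tgt a a l) :
    l.map src ~ l.map tgt :=
  (List.perm_cons a).1 <| h.map_src_append ▸ (List.perm_append_singleton a _).symm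

theorem IsWalk.exists_nodup {v : V} {l : List E} (hl : l ≠ []) (hw : IsWalk src tgt v v l) :
    ∃ w l', l' ≠ [] ∧ l'.Nodup ∧ IsWalk src tgt w w l' := by
  induction hn : l.length using Nat.strong_induction_on generalizing v l with
  | _ n ih =>
  by_cases hnd : l.Nodup
  · exact ⟨v, l, hl, hnd, hw⟩
  obtain ⟨e, hdup⟩ : ∃ e, [e, e] <+ l := by simpa [List.nodup_iff_sublist] using hnd
  obtain ⟨r₁, r₂, rfl, he₁, he₂⟩ := List.cons_sublist_iff.1 hdup
  obtain ⟨p, q, rfl⟩ := List.append_of_mem he₁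
  obtain ⟨p', q', rfl⟩ := List.append_of_mem (List.singleton_sublist.1 he₂)
  rw [show p ++ e :: q ++ (p' ++ e :: q') = p ++ (e :: (q ++ p')) ++ e :: q' by simp] at hw
  obtain ⟨c, hw', hc⟩ := isWalk_append_iff.1 hw
  obtain ⟨a, -, hcycle⟩ := isWalk_append_iff.1 hw'
  have hca : c = a := hc.1.symm.trans hcycle.1
  exact ih _ (by subst hn; simp; omega) (by simp) (hca ▸ hcycle) rfl

variable [DecidableEq V]

def IsBalanced (src tgt : E → V) (F : Finset E) : Prop :=
  ∀ u, #{e ∈ F | tgt e = u} = #{e ∈ F | src e = u}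

theorem IsWalk.isBalanced_toFinset [DecidableEq E] {a : V} {l : List E}
    (hw : IsWalk src tgt a a l) (hnd : l.Nodup) : IsBalanced src tgt l.toFinset := by
  intro u
  have hcard : ∀ f : E → V, #{e ∈ l.toFinset | f e = u} = (l.map f).count u := by
    intro f
    rw [List.count_eq_countP, List.countP_map, List.countP_eq_length_filter,
      ← List.toFinset_card_of_nodup (hnd.filter _), List.toFinset_filter]
    simp
  rw [hcard, hcard, hw.map_src_perm_map_tgt.count_eq]

theorem not_transGen_adj_self (h : ∀ F : Finset E, F.Nonempty → ¬ IsBalanced src tgt F)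
    (v : V) : ¬ Relation.TransGen (Adj src tgt) v v := by
  classical
  intro hv
  obtain ⟨l, hl, hw⟩ := exists_isWalk_of_transGen hv
  obtain ⟨w, l', hl', hnd, hw'⟩ := hw.exists_nodup hl
  exact h _ (List.toFinset_nonempty_iff l' |>.2 hl') (hw'.isBalanced_toFinset hnd)

noncomputable def reorient (ε : E → ℝ) (s t : E → V) (e : E) : V :=
  if ε e = 1 then s e else t e

theorem sum_filter_eq_of_isBalanced_reorient {s t : E → V} {ε : E → ℝ}
    (hε : ∀ e, ε e = 1 ∨ ε e = -1) {F : Finset E}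
    (hF : IsBalanced (reorient ε s t) (reorient ε t s) F) (u : V) :
    ∑ e ∈ F with t e = u, ε e = ∑ e ∈ F with s e = u, ε e := by
  have hedge : ∀ e, (if t e = u then ε e else 0) - (if s e = u then ε e else 0) =
      (if reorient ε t s e = u then 1 else 0) - (if reorient ε s t e = u then 1 else 0) := by
    intro e
    rcases hε e with he | he
    · simp [reorient, he]
    · simp only [reorient, he, show (-1 : ℝ) ≠ 1 by norm_num, if_false]
      split_ifs <;> norm_num
  rw [sum_filter, sum_filter, ← sub_eq_zero, ← sum_sub_distrib, sum_congr rfl fun e _ => hedge e,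
    sum_sub_distrib, ← natCast_card_filter, ← natCast_card_filter, hF u, sub_self]

end Multidigraph

theorem stmt_5_general {V E : Type*} [Fintype V] [DecidableEq V]
    (s t : E → V) (ε : E → ℝ) (hε : ∀ e, ε e = 1 ∨ ε e = -1)
    (h : ∀ E' : Finset E, E'.Nonempty → ∃ v : V,
      ∑ e ∈ E'.filter (fun e => t e = v), ε e ≠
      ∑ e ∈ E'.filter (fun e => s e = v), ε e) :
    ∃ η : V → ℝ, ∀ e, ε e * (η (t e) - η (s e)) > 0 := by
  have hacyclic := Multidigraph.not_transGen_adj_self fun F hF hbal =>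
    (h F hF).elim fun u hu => hu (Multidigraph.sum_filter_eq_of_isBalanced_reorient hε hbal u)
  obtain ⟨η, hη⟩ := Relation.exists_rank_lt_of_not_transGen_self hacyclic
  refine ⟨fun v => η v, fun e => ?_⟩
  have hlt := hη _ _ ⟨e, rfl, rfl⟩
  rcases hε e with he | he <;> simp [Multidigraph.reorient, he] at hlt ⊢ <;> exact_mod_cast hlt

/-- Lemma 4.31 of the paper. Let `(V, E, s, t)` be a finite directed
multigraph and `ε : E → ℝ` take values in `{−1, 1}`.  If for every nonempty subset
`E' ⊆ E` the `ε`-weighted boundary of the 1-chain `∑_{e ∈ E'} ε(e)·e` is nonzero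
(i.e. there is a vertex `v` where the incoming and outgoing `ε`-sums over `E'` differ),
then there is a potential `η : V → ℝ` with `ε(e)·(η(t(e)) − η(s(e))) > 0` for every
edge `e`; in particular the coboundary `ξ(e) = η(t(e)) − η(s(e))` has sign pattern `ε`. -/
theorem stmt_5 {V E : Type*} [Fintype V] [Fintype E] [DecidableEq V]
    (s t : E → V) (ε : E → ℝ) (hε : ∀ e, ε e = 1 ∨ ε e = -1)
    (h : ∀ E' : Finset E, E'.Nonempty → ∃ v : V,
      ∑ e ∈ E'.filter (fun e => t e = v), ε e ≠
      ∑ e ∈ E'.filter (fun e => s e = v), ε e) :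
    ∃ η : V → ℝ, ∀ e, ε e * (η (t e) - η (s e)) > 0 :=
  stmt_5_general s t ε hε h
end

section
/- Let (V, E, s, t) be a finite directed multigraph, let f : V → ℝ satisfy f(s(e)) < f(t(e)) for every edge e, and let ε : E → ℝ take values in {−1, 1} and satisfy ε(e₁) = ε(e₂) whenever t(e₁) = t(e₂) (edges sharing a head have equal sign). Then for every nonempty subset E' ⊆ E there exists a vertex v with Σ_{e ∈ E', t(e) = v} ε(e) ≠ Σ_{e ∈ E', s(e) = v} ε(e); that is, the ε-weighted boundary of the 1-chain Σ_{e ∈ E'} ε(e)·e is nonzero. -/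
open Finset

/-!
Take an edge `e₀ ∈ E'` whose head `v` has maximal `f`. Since `f` increases along edges, no edge
of `E'` leaves `v`, so the outgoing sum at `v` is empty, while the incoming edges at `v` (there is
at least `e₀`) all carry the same sign `ε e₀ ≠ 0`.
-/

theorem exists_mem_forall_src_ne_tgt_of_lt {V E β : Type*} [LinearOrder β]
    (s t : E → V) (f : V → β) (hf : ∀ e, f (s e) < f (t e))
    {E' : Finset E} (hE' : E'.Nonempty) : ∃ e₀ ∈ E', ∀ e ∈ E', s e ≠ t e₀ := by
  obtain ⟨e₀, he₀, hmax⟩ := E'.exists_max_image (f ∘ t) hE'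
  refine ⟨e₀, he₀, fun e he hse => ?_⟩
  have hlt := hf e
  rw [hse] at hlt
  exact (hmax e he).not_gt hlt

theorem Finset.sum_ne_zero_of_forall_eq {ι M : Type*} [AddCommMonoid M] [IsAddTorsionFree M]
    {s : Finset ι} {g : ι → M} {c : M} (hs : s.Nonempty) (hc : c ≠ 0)
    (hg : ∀ i ∈ s, g i = c) : ∑ i ∈ s, g i ≠ 0 := by
  rw [sum_eq_card_nsmul hg]
  exact smul_ne_zero hs.card_pos.ne' hc

theorem stmt_7_general {V E : Type*} [DecidableEq V]
    (s t : E → V) (f : V → ℝ) (hf : ∀ e, f (s e) < f (t e))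
    (ε : E → ℝ) (hε : ∀ e, ε e = 1 ∨ ε e = -1)
    (hhead : ∀ e₁ e₂, t e₁ = t e₂ → ε e₁ = ε e₂) :
    ∀ E' : Finset E, E'.Nonempty → ∃ v : V,
      ∑ e ∈ E'.filter (fun e => t e = v), ε e ≠
      ∑ e ∈ E'.filter (fun e => s e = v), ε e := by
  intro E' hE'
  obtain ⟨e₀, he₀, hsrc⟩ := exists_mem_forall_src_ne_tgt_of_lt s t f hf hE'
  refine ⟨t e₀, ?_⟩
  have hout : E'.filter (fun e => s e = t e₀) = ∅ := filter_eq_empty_iff.mpr hsrc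
  have hε₀ : ε e₀ ≠ 0 := by rcases hε e₀ with h | h <;> norm_num [h]
  rw [hout, sum_empty]
  exact sum_ne_zero_of_forall_eq ⟨e₀, mem_filter.mpr ⟨he₀, rfl⟩⟩ hε₀
    fun e he => hhead e e₀ (mem_filter.mp he).2

/-- Let `(V, E, s, t)` be a finite directed multigraph, `f : V → ℝ`
strictly increase along every edge, and `ε : E → ℝ` take values in `{−1, 1}` with equal
values on edges sharing a head.  Then for every nonempty `E' ⊆ E` the `ε`-weighted
boundary of the 1-chain `∑_{e ∈ E'} ε(e)·e` is nonzero: some vertex `v` has different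
incoming and outgoing `ε`-sums over `E'`. -/
theorem stmt_7 {V E : Type*} [Fintype V] [Fintype E] [DecidableEq V]
    (s t : E → V) (f : V → ℝ) (hf : ∀ e, f (s e) < f (t e))
    (ε : E → ℝ) (hε : ∀ e, ε e = 1 ∨ ε e = -1)
    (hhead : ∀ e₁ e₂, t e₁ = t e₂ → ε e₁ = ε e₂) :
    ∀ E' : Finset E, E'.Nonempty → ∃ v : V,
      ∑ e ∈ E'.filter (fun e => t e = v), ε e ≠
      ∑ e ∈ E'.filter (fun e => s e = v), ε e :=
  stmt_7_general s t f hf ε hε hhead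
end

section
/- Let μ be a finite Borel measure on the interval [0,1] such that μ(J) > 0 for every nonempty open subinterval J of (0,1), let f : [0,1] → ℝ be strictly increasing, and let c₀ ≤ 0 be a real number. Define g(x) := c₀ + ∫_{[0,x]} f dμ. If g(1) ≤ 0, then g(x) < 0 for every x ∈ (0,1). -/
/-!
Since `f` is increasing, `f x < 0` forces `f < 0` on `[0, x]`, so the integral over `[0, x]` is
negative and `g x < c₀ ≤ 0`; otherwise `f > 0` on `(x, 1]`, a set of positive mass, so
`g x < g 1 ≤ 0`.
-/

open MeasureTheory Set

theorem setIntegral_pos_of_forall_pos {α : Type*} [MeasurableSpace α] {μ : Measure α}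
    {s : Set α} {f : α → ℝ} (hs : MeasurableSet s) (hμs : μ s ≠ 0)
    (hfi : IntegrableOn f s μ) (hf : ∀ x ∈ s, 0 < f x) : 0 < ∫ x in s, f x ∂μ := by
  have hnonneg : 0 ≤ᵐ[μ.restrict s] f :=
    (ae_restrict_iff' hs).2 (ae_of_all _ fun x hx => (hf x hx).le)
  rw [setIntegral_pos_iff_support_of_nonneg_ae hnonneg hfi,
    inter_eq_self_of_subset_right (s := Function.support f) fun x hx => (hf x hx).ne']
  exact pos_iff_ne_zero.2 hμs

theorem setIntegral_neg_of_forall_neg {α : Type*} [MeasurableSpace α] {μ : Measure α}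
    {s : Set α} {f : α → ℝ} (hs : MeasurableSet s) (hμs : μ s ≠ 0)
    (hfi : IntegrableOn f s μ) (hf : ∀ x ∈ s, f x < 0) : ∫ x in s, f x ∂μ < 0 := by
  simpa [integral_neg] using
    setIntegral_pos_of_forall_pos hs hμs hfi.neg fun x hx => neg_pos.2 (hf x hx)

section Interval

variable {μ : Measure ℝ} {f : ℝ → ℝ}

theorem setIntegral_Icc_add_setIntegral_Ioc {a b c : ℝ} (hab : a ≤ b) (hbc : b ≤ c)
    (hf : IntegrableOn f (Icc a c) μ) :
    ∫ t in Icc a b, f t ∂μ + ∫ t in Ioc b c, f t ∂μ = ∫ t in Icc a c, f t ∂μ := by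
  have hdisj : Disjoint (Icc a b) (Ioc b c) :=
    disjoint_left.2 fun _ ht ht' => ht'.1.not_ge ht.2
  rw [← setIntegral_union hdisj measurableSet_Ioc (hf.mono_set (Icc_subset_Icc_right hbc))
    (hf.mono_set (Ioc_subset_Icc_self.trans (Icc_subset_Icc_left hab))),
    Icc_union_Ioc_eq_Icc hab hbc]

variable [IsLocallyFiniteMeasure μ]

theorem setIntegral_Icc_neg_of_monotoneOn {a x : ℝ} (hf : MonotoneOn f (Icc a x))
    (hfx : f x < 0) (hμ : μ (Icc a x) ≠ 0) : ∫ t in Icc a x, f t ∂μ < 0 := by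
  obtain ⟨_, hat, htx⟩ := nonempty_of_measure_ne_zero hμ
  have hx : x ∈ Icc a x := ⟨hat.trans htx, le_rfl⟩
  exact setIntegral_neg_of_forall_neg measurableSet_Icc hμ
    (hf.integrableOn_isCompact isCompact_Icc) fun t ht => (hf ht hx ht.2).trans_lt hfx

theorem setIntegral_Ioc_pos_of_strictMonoOn {x b : ℝ} (hf : StrictMonoOn f (Icc x b))
    (hfx : 0 ≤ f x) (hμ : μ (Ioc x b) ≠ 0) : 0 < ∫ t in Ioc x b, f t ∂μ := by
  refine setIntegral_pos_of_forall_pos measurableSet_Ioc hμ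
    ((hf.monotoneOn.integrableOn_isCompact isCompact_Icc).mono_set Ioc_subset_Icc_self)
    fun t ht => hfx.trans_lt (hf ⟨le_rfl, ht.1.le.trans ht.2⟩ (Ioc_subset_Icc_self ht) ht.1)

end Interval

theorem stmt_12_general (μ : Measure ℝ) [IsFiniteMeasure μ]
    (hpos : ∀ x y : ℝ, 0 ≤ x → x < y → y ≤ 1 → 0 < μ (Set.Ioo x y))
    (f : ℝ → ℝ) (hf : StrictMonoOn f (Set.Icc (0 : ℝ) 1))
    (c₀ : ℝ) (hc₀ : c₀ ≤ 0)
    (g : ℝ → ℝ) (hg : ∀ x : ℝ, g x = c₀ + ∫ t in Set.Icc 0 x, f t ∂μ)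
    (h1 : g 1 ≤ 0) :
    ∀ x ∈ Set.Ioo (0 : ℝ) 1, g x < 0 := by
  rintro x ⟨hx0, hx1⟩
  rcases lt_or_ge (f x) 0 with hfx | hfx
  · have hμ : μ (Icc 0 x) ≠ 0 :=
      ((hpos 0 x le_rfl hx0 hx1.le).trans_le (measure_mono Ioo_subset_Icc_self)).ne'
    have hneg := setIntegral_Icc_neg_of_monotoneOn
      (hf.monotoneOn.mono (Icc_subset_Icc_right hx1.le)) hfx hμ
    linarith [hg x]
  · have hμ : μ (Ioc x 1) ≠ 0 :=
      ((hpos x 1 hx0.le hx1 le_rfl).trans_le (measure_mono Ioo_subset_Ioc_self)).ne'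
    have hpos' := setIntegral_Ioc_pos_of_strictMonoOn
      (hf.mono (Icc_subset_Icc_left hx0.le)) hfx hμ
    have hsplit := setIntegral_Icc_add_setIntegral_Ioc (μ := μ) hx0.le hx1.le
      (hf.monotoneOn.integrableOn_isCompact isCompact_Icc)
    linarith [hg x, hg 1]

/-- Remark 4.22. Let `μ` be a finite Borel measure on `[0,1]`
(supported there) giving positive mass to every nonempty open subinterval of `(0,1)`,
let `f` be strictly increasing on `[0,1]`, and let `c₀ ≤ 0`.  Define
`g(x) = c₀ + ∫_{[0,x]} f dμ`.  If `g(1) ≤ 0`, then `g(x) < 0` for every `x ∈ (0,1)`. -/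
theorem stmt_12 (μ : Measure ℝ) [IsFiniteMeasure μ]
    (hsupp : μ (Set.Icc (0 : ℝ) 1)ᶜ = 0)
    (hpos : ∀ x y : ℝ, 0 ≤ x → x < y → y ≤ 1 → 0 < μ (Set.Ioo x y))
    (f : ℝ → ℝ) (hf : StrictMonoOn f (Set.Icc (0 : ℝ) 1))
    (c₀ : ℝ) (hc₀ : c₀ ≤ 0)
    (g : ℝ → ℝ) (hg : ∀ x : ℝ, g x = c₀ + ∫ t in Set.Icc 0 x, f t ∂μ)
    (h1 : g 1 ≤ 0) :
    ∀ x ∈ Set.Ioo (0 : ℝ) 1, g x < 0 :=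
  stmt_12_general μ hpos f hf c₀ hc₀ g hg h1
end
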